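/- Let n ≥ 1 and 0 ≤ r ≤ n be integers and let f : [0,1] → ℝ be r times continuously differentiable. Then sup_{x∈[0,1]} |(K_n f)^{(r)}(x) − K_{n−r}(f^{(r)})(x)| ≤ (r(r+1)/(2(n+1)))·‖f^{(r)}‖ + ω(f^{(r)}, (r+1)/(n+1)). -/

import Mathlib

/-- Bernstein basis polynomial `p_{n,k}(x) = C(n,k) x^k (1-x)^{n-k}`. -/
noncomputable def bern (n k : ℕ) (x : ℝ) : ℝ :=
  (n.choose k : ℝ) * x ^ k * (1 - x) ^ (n - k)

/-- Kantorovich operator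
`K_n(f;x) = (n+1) Σ_{k=0}^n p_{n,k}(x) ∫_{k/(n+1)}^{(k+1)/(n+1)} f(t) dt`. -/
noncomputable def kantorovichOp (n : ℕ) (f : ℝ → ℝ) (x : ℝ) : ℝ :=
  ((n : ℝ) + 1) * ∑ k ∈ Finset.range (n + 1),
    bern n k x * ∫ t in ((k : ℝ) / ((n : ℝ) + 1))..(((k : ℝ) + 1) / ((n : ℝ) + 1)), f t

/-- Supremum norm on `[0,1]`. -/
noncomputable def supNorm (g : ℝ → ℝ) : ℝ :=
  ⨆ x : Set.Icc (0:ℝ) 1, |g x|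

/-- First modulus of continuity on `[0,1]`. -/
noncomputable def modCont (g : ℝ → ℝ) (δ : ℝ) : ℝ :=
  sSup {d : ℝ | ∃ x ∈ Set.Icc (0:ℝ) 1, ∃ y ∈ Set.Icc (0:ℝ) 1, |x - y| ≤ δ ∧ d = |g x - g y|}

/-!
Write `K_n f = ∑ₖ cₖ p_{n,k}`, where `cₖ` is the mean of `f` over the `k`-th cell of length
`h = 1/(n+1)`. Differentiating the Bernstein sum `r` times gives
`n(n-1)⋯(n-r+1) ∑ₖ Δʳcₖ p_{n-r,k}`, and `Δʳcₖ` is the mean over the same cell of the `r`-th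
forward difference of `f` with step `h`, which lies between `hʳ min f⁽ʳ⁾` and `hʳ max f⁽ʳ⁾` on
`Iₖ = [kh, (k+r+1)h]`. So, with `θ = n(n-1)⋯(n-r+1)/(n+1)ʳ`, the `k`-th coefficient of
`(K_n f)⁽ʳ⁾` lies in `θ·[min, max]`, while the `k`-th coefficient of `K_{n-r} f⁽ʳ⁾`, a mean over a
subinterval of `Iₖ`, lies in `[min, max]`. They differ by at most
`(1-θ)‖f⁽ʳ⁾‖ + ω(f⁽ʳ⁾, (r+1)h)`, and `1 - θ ≤ ∑_{i<r} (i+1)h = r(r+1)h/2`.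
-/

open Finset fwdDiff

lemma bern_eq_eval (n k : ℕ) : bern n k = fun x => (bernsteinPolynomial ℝ n k).eval x := by
  funext x
  simp [bern, bernsteinPolynomial]

lemma bern_nonneg (n k : ℕ) {x : ℝ} (hx : x ∈ Set.Icc 0 1) : 0 ≤ bern n k x := by
  obtain ⟨hx₀, hx₁⟩ := hx
  have : 0 ≤ 1 - x := sub_nonneg.2 hx₁
  unfold bern
  positivity

lemma sum_bern (n : ℕ) (x : ℝ) : ∑ k ∈ range (n + 1), bern n k x = 1 := by
  simpa [bern_eq_eval, Polynomial.eval_finsetSum] using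
    congrArg (Polynomial.eval x) (bernsteinPolynomial.sum ℝ n)

lemma abs_sum_mul_bern_le (m : ℕ) {d : ℕ → ℝ} {B x : ℝ} (hx : x ∈ Set.Icc (0 : ℝ) 1)
    (hd : ∀ k ∈ range (m + 1), |d k| ≤ B) :
    |∑ k ∈ range (m + 1), d k * bern m k x| ≤ B :=
  calc |∑ k ∈ range (m + 1), d k * bern m k x|
      ≤ ∑ k ∈ range (m + 1), |d k| * bern m k x := by
        refine (abs_sum_le_sum_abs _ _).trans_eq (sum_congr rfl fun k _ => ?_)
        rw [abs_mul, abs_of_nonneg (bern_nonneg m k hx)]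
    _ ≤ ∑ k ∈ range (m + 1), B * bern m k x :=
        sum_le_sum fun k hk => mul_le_mul_of_nonneg_right (hd k hk) (bern_nonneg m k hx)
    _ = B := by rw [← mul_sum, sum_bern, mul_one]

lemma hasDerivAt_bern_zero (n : ℕ) (x : ℝ) :
    HasDerivAt (bern (n + 1) 0) (-((n : ℝ) + 1) * bern n 0 x) x := by
  have hpoly := (bernsteinPolynomial ℝ (n + 1) 0).hasDerivAt x
  rw [bernsteinPolynomial.derivative_zero] at hpoly
  simpa [bern_eq_eval] using hpoly

lemma hasDerivAt_bern_succ (n k : ℕ) (x : ℝ) :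
    HasDerivAt (bern (n + 1) (k + 1)) (((n : ℝ) + 1) * (bern n k x - bern n (k + 1) x)) x := by
  have hpoly := (bernsteinPolynomial ℝ (n + 1) (k + 1)).hasDerivAt x
  rw [bernsteinPolynomial.derivative_succ_aux] at hpoly
  simpa [bern_eq_eval] using hpoly

lemma hasDerivAt_sum_mul_bern (n : ℕ) (c : ℕ → ℝ) (x : ℝ) :
    HasDerivAt (fun y => ∑ k ∈ range (n + 2), c k * bern (n + 1) k y)
      (((n : ℝ) + 1) * ∑ k ∈ range (n + 1), Δ_[1] c k * bern n k x) x := by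
  simp_rw [sum_range_succ' _ (n + 1)]
  refine ((HasDerivAt.fun_sum fun k (_ : k ∈ range (n + 1)) =>
    (hasDerivAt_bern_succ n k x).const_mul (c (k + 1))).fun_add
      ((hasDerivAt_bern_zero n x).const_mul (c 0))).congr_deriv ?_
  -- summation by parts; the boundary term vanishes because `bern n (n + 1) = 0`
  have hshift := sum_range_succ' (fun k => c k * bern n k x) (n + 1)
  rw [sum_range_succ, show bern n (n + 1) x = 0 by simp [bern]] at hshift
  have hsplit : ∀ k, c (k + 1) * (((n : ℝ) + 1) * (bern n k x - bern n (k + 1) x)) =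
      ((n : ℝ) + 1) * (c (k + 1) * bern n k x) - ((n : ℝ) + 1) * (c (k + 1) * bern n (k + 1) x) :=
    fun k => by ring
  simp only [hsplit, fwdDiff, sub_mul, sum_sub_distrib, ← mul_sum]
  linear_combination ((n : ℝ) + 1) * hshift

lemma iteratedDeriv_sum_mul_bern (m r : ℕ) (c : ℕ → ℝ) :
    iteratedDeriv r (fun y => ∑ k ∈ range (m + r + 1), c k * bern (m + r) k y) =
      fun x => ((m + r).descFactorial r : ℝ) *
        ∑ k ∈ range (m + 1), (Δ_[1])^[r] c k * bern m k x := by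
  induction r generalizing c with
  | zero => simp
  | succ r ih =>
    have hderiv : deriv (fun y => ∑ k ∈ range (m + (r + 1) + 1), c k * bern (m + (r + 1)) k y) =
        fun x => ((m + r : ℕ) + 1 : ℝ) * ∑ k ∈ range (m + r + 1), Δ_[1] c k * bern (m + r) k x :=
      funext fun x => (hasDerivAt_sum_mul_bern (m + r) c x).deriv
    funext x
    rw [iteratedDeriv_succ', hderiv, iteratedDeriv_const_mul_field, ih,
      ← add_assoc, Nat.succ_descFactorial_succ, Function.iterate_succ_apply]
    push_cast
    ring

section Continuity

variable {M G : Type*} [AddCommMonoid M] [TopologicalSpace M] [ContinuousAdd M]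
  [AddCommGroup G] [TopologicalSpace G] [IsTopologicalAddGroup G] {f : M → G}

lemma Continuous.fwdDiff (hf : Continuous f) (h : M) : Continuous (Δ_[h] f) :=
  (hf.comp (continuous_add_const h)).sub hf

lemma Continuous.fwdDiff_iter (hf : Continuous f) (h : M) (r : ℕ) :
    Continuous ((Δ_[h])^[r] f) := by
  induction r with
  | zero => exact hf
  | succ r ih => rw [Function.iterate_succ_apply']; exact ih.fwdDiff h

end Continuity

lemma iteratedDeriv_fwdDiff {f : ℝ → ℝ} {r : ℕ} (hf : ContDiff ℝ r f) (h : ℝ) :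
    iteratedDeriv r (Δ_[h] f) = Δ_[h] (iteratedDeriv r f) := by
  funext s
  have hshift : ContDiff ℝ r fun t => f (t + h) := hf.comp (contDiff_id.add contDiff_const)
  change iteratedDeriv r (fun t => f (t + h) - f t) s = _
  rw [iteratedDeriv_fun_sub hshift.contDiffAt hf.contDiffAt, iteratedDeriv_comp_add_const]
  rfl

lemma fwdDiff_mem_Icc_of_mapsTo_deriv {F : ℝ → ℝ} (hF : Differentiable ℝ F) {h s a b : ℝ}
    (hh : 0 ≤ h) (hF' : Set.MapsTo (deriv F) (Set.Icc s (s + h)) (Set.Icc a b)) :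
    Δ_[h] F s ∈ Set.Icc (a * h) (b * h) := by
  have hs : s ∈ Set.Icc s (s + h) := Set.left_mem_Icc.2 (by linarith)
  have hsh : s + h ∈ Set.Icc s (s + h) := Set.right_mem_Icc.2 (by linarith)
  have hlo := (convex_Icc s (s + h)).mul_sub_le_image_sub_of_le_deriv hF.continuous.continuousOn
    hF.differentiableOn (fun x hx => (hF' (interior_subset hx)).1) s hs (s + h) hsh (by linarith)
  have hhi := (convex_Icc s (s + h)).image_sub_le_mul_sub_of_deriv_le hF.continuous.continuousOn
    hF.differentiableOn (fun x hx => (hF' (interior_subset hx)).2) s hs (s + h) hsh (by linarith)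
  rw [add_sub_cancel_left] at hlo hhi
  exact ⟨hlo, hhi⟩

lemma fwdDiff_iter_mem_Icc {f : ℝ → ℝ} {r : ℕ} (hf : ContDiff ℝ r f) {h t a b : ℝ} (hh : 0 ≤ h)
    (hbd : Set.MapsTo (iteratedDeriv r f) (Set.Icc t (t + r * h)) (Set.Icc a b)) :
    (Δ_[h])^[r] f t ∈ Set.Icc (a * h ^ r) (b * h ^ r) := by
  induction r generalizing f a b with
  | zero => simpa using hbd (Set.left_mem_Icc.2 (by simp))
  | succ r ih =>
    have hfr : ContDiff ℝ r f := hf.of_le (by exact_mod_cast Nat.le_succ r)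
    have hΔ : ContDiff ℝ r (Δ_[h] f) := (hfr.comp (contDiff_id.add contDiff_const)).sub hfr
    have hmaps : Set.MapsTo (iteratedDeriv r (Δ_[h] f)) (Set.Icc t (t + r * h))
        (Set.Icc (a * h) (b * h)) := by
      intro s hs
      rw [iteratedDeriv_fwdDiff hfr]
      refine fwdDiff_mem_Icc_of_mapsTo_deriv
        (hf.differentiable_iteratedDeriv r (by exact_mod_cast Nat.lt_succ_self r)) hh ?_
      intro u hu
      rw [← iteratedDeriv_succ]
      exact hbd ⟨by linarith [hs.1, hu.1], by push_cast; linarith [hs.2, hu.2]⟩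
    rw [Function.iterate_succ_apply, pow_succ', ← mul_assoc, ← mul_assoc]
    exact ih hΔ hmaps

lemma integral_mem_Icc_of_mapsTo {g : ℝ → ℝ} {u v a b : ℝ} (huv : u ≤ v)
    (hg : IntervalIntegrable g MeasureTheory.volume u v)
    (hbd : Set.MapsTo g (Set.Icc u v) (Set.Icc a b)) :
    ∫ t in u..v, g t ∈ Set.Icc (a * (v - u)) (b * (v - u)) := by
  have hlo := intervalIntegral.integral_mono_on huv intervalIntegrable_const hg
    fun t ht => (hbd ht).1
  have hhi := intervalIntegral.integral_mono_on huv hg intervalIntegrable_const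
    fun t ht => (hbd ht).2
  rw [intervalIntegral.integral_const, smul_eq_mul, mul_comm] at hlo hhi
  exact ⟨hlo, hhi⟩

noncomputable def kantorovichCoeff (n : ℕ) (f : ℝ → ℝ) (k : ℕ) : ℝ :=
  ((n : ℝ) + 1) * ∫ t in ((k : ℝ) / ((n : ℝ) + 1))..(((k : ℝ) + 1) / ((n : ℝ) + 1)), f t

lemma kantorovichOp_eq_sum (n : ℕ) (f : ℝ → ℝ) (x : ℝ) :
    kantorovichOp n f x = ∑ k ∈ range (n + 1), kantorovichCoeff n f k * bern n k x := by
  rw [kantorovichOp, mul_sum]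
  exact sum_congr rfl fun k _ => by rw [kantorovichCoeff]; ring

lemma fwdDiff_kantorovichCoeff (n : ℕ) {f : ℝ → ℝ} (hf : Continuous f) :
    Δ_[1] (kantorovichCoeff n f) = kantorovichCoeff n (Δ_[((n : ℝ) + 1)⁻¹] f) := by
  funext k
  have hshift : Continuous fun t => f (t + ((n : ℝ) + 1)⁻¹) := by fun_prop
  simp only [fwdDiff, kantorovichCoeff]
  rw [← mul_sub, intervalIntegral.integral_sub (hshift.intervalIntegrable _ _)
    (hf.intervalIntegrable _ _), intervalIntegral.integral_comp_add_right]
  congr 3 <;> push_cast <;> field_simp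

lemma fwdDiff_iter_kantorovichCoeff (n r : ℕ) {f : ℝ → ℝ} (hf : Continuous f) :
    (Δ_[1])^[r] (kantorovichCoeff n f) = kantorovichCoeff n ((Δ_[((n : ℝ) + 1)⁻¹])^[r] f) := by
  induction r generalizing f with
  | zero => rfl
  | succ r ih =>
    rw [Function.iterate_succ_apply, Function.iterate_succ_apply, fwdDiff_kantorovichCoeff n hf,
      ih (hf.fwdDiff _)]

lemma iteratedDeriv_kantorovichOp (m r : ℕ) {f : ℝ → ℝ} (hf : Continuous f) (x : ℝ) :
    iteratedDeriv r (kantorovichOp (m + r) f) x =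
      ((m + r).descFactorial r : ℝ) * ∑ k ∈ range (m + 1),
        kantorovichCoeff (m + r) ((Δ_[(((m + r : ℕ) : ℝ) + 1)⁻¹])^[r] f) k * bern m k x := by
  rw [show kantorovichOp (m + r) f = _ from funext (kantorovichOp_eq_sum (m + r) f),
    iteratedDeriv_sum_mul_bern, fwdDiff_iter_kantorovichCoeff _ _ hf]

lemma kantorovichCoeff_mem_Icc (n k : ℕ) {g : ℝ → ℝ} (hg : Continuous g) {a b : ℝ}
    (hbd : Set.MapsTo g (Set.Icc ((k : ℝ) / ((n : ℝ) + 1)) (((k : ℝ) + 1) / ((n : ℝ) + 1)))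
      (Set.Icc a b)) :
    kantorovichCoeff n g k ∈ Set.Icc a b := by
  have hn : (0 : ℝ) < (n : ℝ) + 1 := by positivity
  have hint := integral_mem_Icc_of_mapsTo
    (div_le_div_of_nonneg_right (by linarith) hn.le) (hg.intervalIntegrable _ _) hbd
  rw [← sub_div, add_sub_cancel_left] at hint
  unfold kantorovichCoeff
  constructor
  · calc a = ((n : ℝ) + 1) * (a * (1 / ((n : ℝ) + 1))) := by field_simp
      _ ≤ _ := mul_le_mul_of_nonneg_left hint.1 hn.le
  · calc _ ≤ ((n : ℝ) + 1) * (b * (1 / ((n : ℝ) + 1))) := mul_le_mul_of_nonneg_left hint.2 hn.le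
      _ = b := by field_simp

lemma descFactorial_mul_kantorovichCoeff_mem_Icc (n r k : ℕ) {f : ℝ → ℝ} (hf : ContDiff ℝ r f)
    {a b : ℝ} (hbd : Set.MapsTo (iteratedDeriv r f)
      (Set.Icc ((k : ℝ) / ((n : ℝ) + 1)) (((k : ℝ) + r + 1) / ((n : ℝ) + 1))) (Set.Icc a b)) :
    (n.descFactorial r : ℝ) * kantorovichCoeff n ((Δ_[((n : ℝ) + 1)⁻¹])^[r] f) k ∈
      Set.Icc ((n.descFactorial r : ℝ) / ((n : ℝ) + 1) ^ r * a)
        ((n.descFactorial r : ℝ) / ((n : ℝ) + 1) ^ r * b) := by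
  set h : ℝ := ((n : ℝ) + 1)⁻¹
  have hcoeff : kantorovichCoeff n ((Δ_[h])^[r] f) k ∈ Set.Icc (a * h ^ r) (b * h ^ r) := by
    refine kantorovichCoeff_mem_Icc n k (hf.continuous.fwdDiff_iter h r) fun s hs => ?_
    refine fwdDiff_iter_mem_Icc hf (by positivity) (hbd.mono_left (Set.Icc_subset_Icc hs.1 ?_))
    have hend : ((k : ℝ) + 1) / ((n : ℝ) + 1) + r * h = ((k : ℝ) + r + 1) / ((n : ℝ) + 1) := by
      simp only [h]; ring
    linarith [hs.2]
  have hd : (0 : ℝ) ≤ n.descFactorial r := Nat.cast_nonneg _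
  rw [div_eq_mul_inv, ← inv_pow, mul_assoc, mul_assoc, mul_comm (h ^ r), mul_comm (h ^ r)]
  exact ⟨mul_le_mul_of_nonneg_left hcoeff.1 hd, mul_le_mul_of_nonneg_left hcoeff.2 hd⟩

lemma descFactorial_div_pow_le_one (n r : ℕ) : (n.descFactorial r : ℝ) / ((n : ℝ) + 1) ^ r ≤ 1 := by
  rw [div_le_one (by positivity)]
  calc (n.descFactorial r : ℝ) ≤ (n : ℝ) ^ r := by exact_mod_cast Nat.descFactorial_le_pow n r
    _ ≤ ((n : ℝ) + 1) ^ r := by gcongr; linarith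

lemma one_sub_descFactorial_div_pow_le (n r : ℕ) :
    1 - (n.descFactorial r : ℝ) / ((n : ℝ) + 1) ^ r ≤
      (r : ℝ) * ((r : ℝ) + 1) / (2 * ((n : ℝ) + 1)) := by
  induction r with
  | zero => simp
  | succ r ih =>
    have hn : (0 : ℝ) < (n : ℝ) + 1 := by positivity
    have hθ₀ : (0 : ℝ) ≤ (n.descFactorial r : ℝ) / ((n : ℝ) + 1) ^ r := by positivity
    have hθ₁ := descFactorial_div_pow_le_one n r
    have hsub : (n : ℝ) - r ≤ ((n - r : ℕ) : ℝ) := by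
      rcases le_total r n with h | h
      · rw [Nat.cast_sub h]
      · rw [Nat.sub_eq_zero_of_le h, Nat.cast_zero, sub_nonpos]
        exact_mod_cast h
    have hstep : (n.descFactorial (r + 1) : ℝ) / ((n : ℝ) + 1) ^ (r + 1) =
        (n.descFactorial r : ℝ) / ((n : ℝ) + 1) ^ r * (((n - r : ℕ) : ℝ) / ((n : ℝ) + 1)) := by
      rw [Nat.descFactorial_succ, Nat.cast_mul, pow_succ]
      field_simp
    have hfactor : ((n : ℝ) - r) / ((n : ℝ) + 1) ≤ ((n - r : ℕ) : ℝ) / ((n : ℝ) + 1) :=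
      div_le_div_of_nonneg_right hsub hn.le
    rw [hstep]
    calc 1 - (n.descFactorial r : ℝ) / ((n : ℝ) + 1) ^ r * (((n - r : ℕ) : ℝ) / ((n : ℝ) + 1))
        ≤ 1 - (n.descFactorial r : ℝ) / ((n : ℝ) + 1) ^ r * (((n : ℝ) - r) / ((n : ℝ) + 1)) :=
          sub_le_sub_left (mul_le_mul_of_nonneg_left hfactor hθ₀) 1
      _ = (1 - (n.descFactorial r : ℝ) / ((n : ℝ) + 1) ^ r)
          + (n.descFactorial r : ℝ) / ((n : ℝ) + 1) ^ r * (((r : ℝ) + 1) / ((n : ℝ) + 1)) := by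
          field_simp; ring
      _ ≤ (r : ℝ) * ((r : ℝ) + 1) / (2 * ((n : ℝ) + 1)) + ((r : ℝ) + 1) / ((n : ℝ) + 1) :=
          add_le_add ih (mul_le_of_le_one_left (by positivity) hθ₁)
      _ = ((r + 1 : ℕ) : ℝ) * (((r + 1 : ℕ) : ℝ) + 1) / (2 * ((n : ℝ) + 1)) := by
          push_cast; field_simp; ring

lemma abs_sub_le_of_mem_Icc_mul {θ lo hi T₁ T₂ N : ℝ} (hθ : θ ≤ 1)
    (h₁ : T₁ ∈ Set.Icc (θ * lo) (θ * hi)) (h₂ : T₂ ∈ Set.Icc lo hi) (hN : |T₂| ≤ N) :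
    |T₁ - T₂| ≤ (1 - θ) * N + (hi - lo) := by
  have hscaled : |T₁ - θ * T₂| ≤ hi - lo := by
    rw [abs_le]
    constructor <;> nlinarith [h₁.1, h₁.2, h₂.1, h₂.2]
  have hrest : |θ * T₂ - T₂| ≤ (1 - θ) * N := by
    rw [show θ * T₂ - T₂ = -((1 - θ) * T₂) by ring, abs_neg, abs_mul, abs_of_nonneg (by linarith)]
    exact mul_le_mul_of_nonneg_left hN (by linarith)
  calc |T₁ - T₂| ≤ |T₁ - θ * T₂| + |θ * T₂ - T₂| := abs_sub_le _ _ _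
    _ ≤ (1 - θ) * N + (hi - lo) := by linarith

lemma abs_le_supNorm {g : ℝ → ℝ} (hg : ContinuousOn g (Set.Icc 0 1)) {x : ℝ}
    (hx : x ∈ Set.Icc (0 : ℝ) 1) : |g x| ≤ supNorm g := by
  obtain ⟨C, hC⟩ := isCompact_Icc.exists_bound_of_continuousOn hg
  exact le_ciSup (f := fun y : Set.Icc (0 : ℝ) 1 => |g y|)
    ⟨C, by rintro _ ⟨y, rfl⟩; exact hC y y.2⟩ ⟨x, hx⟩

lemma abs_sub_le_modCont {g : ℝ → ℝ} (hg : ContinuousOn g (Set.Icc 0 1)) {δ x y : ℝ}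
    (hx : x ∈ Set.Icc (0 : ℝ) 1) (hy : y ∈ Set.Icc (0 : ℝ) 1) (hxy : |x - y| ≤ δ) :
    |g x - g y| ≤ modCont g δ := by
  obtain ⟨C, hC⟩ := isCompact_Icc.exists_bound_of_continuousOn hg
  refine le_csSup ⟨2 * C, ?_⟩ ⟨x, hx, y, hy, hxy, rfl⟩
  rintro _ ⟨a, ha, b, hb, -, rfl⟩
  have ha' : |g a| ≤ C := hC a ha
  have hb' : |g b| ≤ C := hC b hb
  linarith [abs_sub (g a) (g b)]

lemma kantorovich_cell_subset (m r k : ℕ) (hk : k ≤ m) :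
    Set.Icc ((k : ℝ) / ((m : ℝ) + 1)) (((k : ℝ) + 1) / ((m : ℝ) + 1)) ⊆
      Set.Icc ((k : ℝ) / (((m + r : ℕ) : ℝ) + 1))
        (((k : ℝ) + r + 1) / (((m + r : ℕ) : ℝ) + 1)) := by
  have hkm : (k : ℝ) ≤ m := by exact_mod_cast hk
  have hr : (0 : ℝ) ≤ r := Nat.cast_nonneg r
  push_cast
  refine Set.Icc_subset_Icc (div_le_div_of_nonneg_left (by positivity) (by positivity)
    (by linarith)) ?_
  rw [div_le_div_iff₀ (by positivity) (by positivity)]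
  nlinarith

lemma abs_descFactorial_mul_kantorovichCoeff_sub_le (m r k : ℕ) (hk : k ≤ m) {f : ℝ → ℝ}
    (hf : ContDiff ℝ r f) :
    |((m + r).descFactorial r : ℝ) *
        kantorovichCoeff (m + r) ((Δ_[(((m + r : ℕ) : ℝ) + 1)⁻¹])^[r] f) k -
      kantorovichCoeff m (iteratedDeriv r f) k| ≤
      (r : ℝ) * ((r : ℝ) + 1) / (2 * (((m + r : ℕ) : ℝ) + 1)) * supNorm (iteratedDeriv r f)
        + modCont (iteratedDeriv r f) (((r : ℝ) + 1) / (((m + r : ℕ) : ℝ) + 1)) := by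
  set g := iteratedDeriv r f
  have hg : Continuous g := hf.continuous_iteratedDeriv r le_rfl
  set I := Set.Icc ((k : ℝ) / (((m + r : ℕ) : ℝ) + 1)) (((k : ℝ) + r + 1) / (((m + r : ℕ) : ℝ) + 1))
  have hn : (0 : ℝ) < ((m + r : ℕ) : ℝ) + 1 := by positivity
  have hIne : I.Nonempty := Set.nonempty_Icc.2 <|
    div_le_div_of_nonneg_right (by linarith [(Nat.cast_nonneg r : (0 : ℝ) ≤ r)]) hn.le
  have hI : I ⊆ Set.Icc 0 1 := by
    refine Set.Icc_subset_Icc (by positivity) ((div_le_one hn).2 ?_)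
    have : (k : ℝ) ≤ m := by exact_mod_cast hk
    push_cast
    linarith
  obtain ⟨u, hu, hmin⟩ := isCompact_Icc.exists_isMinOn hIne hg.continuousOn
  obtain ⟨v, hv, hmax⟩ := isCompact_Icc.exists_isMaxOn hIne hg.continuousOn
  have hmaps : Set.MapsTo g I (Set.Icc (g u) (g v)) := fun s hs => ⟨hmin hs, hmax hs⟩
  have hT₁ := descFactorial_mul_kantorovichCoeff_mem_Icc (m + r) r k hf hmaps
  have hT₂ := kantorovichCoeff_mem_Icc m k hg (hmaps.mono_left (kantorovich_cell_subset m r k hk))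
  have hN : |kantorovichCoeff m g k| ≤ supNorm g :=
    abs_le_max_abs_abs hT₂.1 hT₂.2 |>.trans
      (max_le (abs_le_supNorm hg.continuousOn (hI hu)) (abs_le_supNorm hg.continuousOn (hI hv)))
  have hω : g v - g u ≤ modCont g (((r : ℝ) + 1) / (((m + r : ℕ) : ℝ) + 1)) := by
    refine (le_abs_self _).trans (abs_sub_le_modCont hg.continuousOn (hI hv) (hI hu) ?_)
    have hlen : ((k : ℝ) + r + 1) / (((m + r : ℕ) : ℝ) + 1) - (k : ℝ) / (((m + r : ℕ) : ℝ) + 1) =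
        ((r : ℝ) + 1) / (((m + r : ℕ) : ℝ) + 1) := by ring
    rw [abs_sub_le_iff]
    constructor <;> linarith [hu.1, hu.2, hv.1, hv.2]
  calc _ ≤ (1 - ((m + r).descFactorial r : ℝ) / (((m + r : ℕ) : ℝ) + 1) ^ r) * supNorm g
        + (g v - g u) := abs_sub_le_of_mem_Icc_mul (descFactorial_div_pow_le_one _ _) hT₁ hT₂ hN
    _ ≤ _ := by
      gcongr
      · exact (abs_nonneg _).trans (abs_le_supNorm hg.continuousOn (hI hu))
      · exact one_sub_descFactorial_div_pow_le _ _

theorem kantorovich_derivative_difference_general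
    (n r : ℕ) (hr : r ≤ n) (f : ℝ → ℝ) (hf : ContDiff ℝ r f) :
    ∀ x ∈ Set.Icc (0:ℝ) 1,
      |iteratedDeriv r (kantorovichOp n f) x - kantorovichOp (n - r) (iteratedDeriv r f) x| ≤
        (r : ℝ) * ((r : ℝ) + 1) / (2 * ((n : ℝ) + 1)) * supNorm (iteratedDeriv r f)
          + modCont (iteratedDeriv r f) (((r : ℝ) + 1) / ((n : ℝ) + 1)) := by
  intro x hx
  obtain ⟨m, rfl⟩ := Nat.exists_eq_add_of_le' hr
  rw [Nat.add_sub_cancel, iteratedDeriv_kantorovichOp m r hf.continuous, kantorovichOp_eq_sum,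
    mul_sum, ← sum_sub_distrib]
  simp_rw [← mul_assoc, ← sub_mul]
  exact abs_sum_mul_bern_le m hx fun k hk =>
    abs_descFactorial_mul_kantorovichCoeff_sub_le m r k (Nat.lt_succ_iff.mp (mem_range.mp hk)) hf

theorem kantorovich_derivative_difference
    (n r : ℕ) (hn : 1 ≤ n) (hr : r ≤ n) (f : ℝ → ℝ) (hf : ContDiff ℝ r f) :
    ∀ x ∈ Set.Icc (0:ℝ) 1,
      |iteratedDeriv r (kantorovichOp n f) x - kantorovichOp (n - r) (iteratedDeriv r f) x| ≤
        (r : ℝ) * ((r : ℝ) + 1) / (2 * ((n : ℝ) + 1)) * supNorm (iteratedDeriv r f)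
          + modCont (iteratedDeriv r f) (((r : ℝ) + 1) / ((n : ℝ) + 1)) :=
  kantorovich_derivative_difference_general n r hr f hf
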